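/- arXiv:2006.11152 — 3 statements merged into one kernel-verified Lean document; each statement's English description precedes it below -/
import Mathlib

section
/- If A is a Horn formula, A ≡≡ B, and Var(B) ⊆ Var(A), then B is equivalent to some Horn formula, i.e., there exists a Horn formula H with B ⊨ H and H ⊨ B. -/
/-- A literal is a variable with a polarity (`true` = positive). A clause is a
finite set of literals. -/
abbrev Clause (V : Type) := Finset (V × Bool)

/-- A formula is a (finite) set of clauses, read as a conjunction of disjunctions. -/
abbrev Formula (V : Type) := Finset (Clause V)

variable {V : Type} [DecidableEq V]

/-- An assignment satisfies a clause if it makes some literal of it true. -/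
def clauseSat (a : V → Bool) (c : Clause V) : Prop := ∃ l ∈ c, a l.1 = l.2

/-- An assignment satisfies a formula if it satisfies all its clauses. -/
def satF (a : V → Bool) (F : Formula V) : Prop := ∀ c ∈ F, clauseSat a c

/-- Entailment: every model of `A` is a model of `B`. -/
def entails (A B : Formula V) : Prop := ∀ a : V → Bool, satF a A → satF a B

/-- Satisfiability. -/
def satisfiable (F : Formula V) : Prop := ∃ a : V → Bool, satF a F

/-- The set of variables occurring (positively or negatively) in a formula. -/
def vars (F : Formula V) : Set V := {v | ∃ c ∈ F, ∃ b : Bool, (v, b) ∈ c}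

/-- Common equivalence: same consequences on the common variables. -/
def commonEquiv (A B : Formula V) : Prop :=
  ∀ C : Formula V, vars C ⊆ vars A ∩ vars B → (entails A C ↔ entails B C)

/-- An assignment satisfies a set of literals (viewed as unit clauses). -/
def satLits (a : V → Bool) (S : Set (V × Bool)) : Prop := ∀ l ∈ S, a l.1 = l.2

/-- A clause is Horn if it has at most one positive literal. -/
def hornClause (c : Clause V) : Prop := (c.filter (fun l => l.2 = true)).card ≤ 1

/-- A formula is Horn if all its clauses are. -/
def hornFormula (F : Formula V) : Prop := ∀ c ∈ F, hornClause c

/-- A clause is definite Horn if it has exactly one positive literal. -/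
def definiteClause (c : Clause V) : Prop := (c.filter (fun l => l.2 = true)).card = 1

/-- A formula is definite Horn if all its clauses are. -/
def definiteHorn (F : Formula V) : Prop := ∀ c ∈ F, definiteClause c

/-- The size of a formula: total number of literal occurrences. -/
def fsize (F : Formula V) : ℕ := ∑ c ∈ F, c.card

/-- The set of variables `P` as a set of positive unit clauses. -/
def unitsOf (P : Finset V) : Formula V := P.image (fun p => ({(p, true)} : Clause V))

/-- The definite Horn clause `P → x`. -/
def dClause (P : Finset V) (x : V) : Clause V :=
  P.image (fun p => ((p, false) : V × Bool)) ∪ {(x, true)}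

/-- `F ⊨ P`: the formula entails every variable of `P`. -/
def entailsV (F : Formula V) (P : Finset V) : Prop := entails F (unitsOf P)

/-- A definite Horn formula is single-head if no two distinct clauses share a head. -/
def singleHead (F : Formula V) : Prop :=
  ∀ (P P' : Finset V) (x : V), x ∉ P → x ∉ P' →
    dClause P x ∈ F → dClause P' x ∈ F → P = P'

/-- The body of a clause: its negated variables. -/
def body (c : Clause V) : Finset V := (c.filter (fun l => l.2 = false)).image Prod.fst

/-- `F^x`: the clauses of `F` containing neither `x` nor `¬x`. -/
def restr (F : Formula V) (x : V) : Formula V :=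
  F.filter (fun c => ((x, true) : V × Bool) ∉ c ∧ ((x, false) : V × Bool) ∉ c)

/-- `F[⊥/x]`: delete the clauses containing `¬x`, remove the literal `x` elsewhere. -/
def substFalse (F : Formula V) (x : V) : Formula V :=
  (F.filter (fun c => ((x, false) : V × Bool) ∉ c)).image (fun c => c.erase (x, true))

/-- `newvar P x F`: summarize the body part `P` by the new variable `x`. -/
def newvar (P : Finset V) (x : V) (F : Formula V) : Formula V :=
  ((F.filter (fun c => ∀ p ∈ P, ((p, false) : V × Bool) ∈ c)).image
      (fun c => (c \ P.image (fun p => ((p, false) : V × Bool))) ∪ {((x, false) : V × Bool)}))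
    ∪ (F.filter (fun c => ¬ ∀ p ∈ P, ((p, false) : V × Bool) ∈ c))
    ∪ {dClause P x}

/-!
A formula is equivalent to a Horn formula as soon as its models are closed under pointwise
conjunction: it is then equivalent to the Horn clauses over its variables that it entails.
Models of the Horn formula `A` are closed under conjunction, and by common equivalence the
models of `B`, restricted to `Var(B) ⊆ Var(A)`, are exactly the restrictions of models of `A`.
-/

def varsFin (F : Formula V) : Finset V := F.biUnion (fun c => c.image Prod.fst)

lemma mem_varsFin {F : Formula V} {v : V} : v ∈ varsFin F ↔ v ∈ vars F := by
  simp only [varsFin, Finset.mem_biUnion, Finset.mem_image, vars, Set.mem_ofPred_eq]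
  constructor
  · rintro ⟨c, hc, ⟨x, b⟩, hl, rfl⟩; exact ⟨c, hc, b, hl⟩
  · rintro ⟨c, hc, b, hl⟩; exact ⟨c, hc, (v, b), hl, rfl⟩

lemma satF_congr {F : Formula V} {a a' : V → Bool}
    (hag : ∀ v ∈ varsFin F, a v = a' v) (hs : satF a F) : satF a' F := by
  intro c hc
  obtain ⟨l, hl, hal⟩ := hs c hc
  refine ⟨l, hl, ?_⟩
  rw [← hag l.1 (Finset.mem_biUnion.mpr ⟨c, hc, Finset.mem_image.mpr ⟨l, hl, rfl⟩⟩)]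
  exact hal

omit [DecidableEq V] in
lemma entails_singleton_iff {F : Formula V} {c : Clause V} :
    entails F {c} ↔ ∀ a, satF a F → clauseSat a c := by
  simp [entails, satF]

lemma clauseSat_image_iff {a : V → Bool} {W : Finset V} {f : V → Bool} :
    clauseSat a (W.image fun v => (v, f v)) ↔ ∃ v ∈ W, a v = f v := by
  simp [clauseSat]

lemma clauseSat_dClause_iff {a : V → Bool} {P : Finset V} {x : V} :
    clauseSat a (dClause P x) ↔ (∃ p ∈ P, a p = false) ∨ a x = true := by
  simp [clauseSat, dClause, or_comm]

lemma hornClause_image_neg (P : Finset V) :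
    hornClause (P.image fun p => ((p, false) : V × Bool)) := by
  simp [hornClause, Finset.filter_image]

lemma hornClause_dClause (P : Finset V) (x : V) : hornClause (dClause P x) := by
  simp [hornClause, dClause, Finset.filter_insert, Finset.filter_image]

def modelsAndClosed (F : Formula V) : Prop :=
  ∀ a b : V → Bool, satF a F → satF b F → satF (fun v => a v && b v) F

omit [DecidableEq V] in
/-- Only a positive literal can be true under `a` and `b` but false under `a && b`, and a
Horn clause has at most one. -/
lemma modelsAndClosed_of_hornFormula {F : Formula V} (hF : hornFormula F) :
    modelsAndClosed F := by
  intro a b ha hb c hc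
  obtain ⟨l₁, hl₁, h₁⟩ := ha c hc
  obtain ⟨l₂, hl₂, h₂⟩ := hb c hc
  cases e₁ : l₁.2
  · exact ⟨l₁, hl₁, by simp_all⟩
  cases e₂ : l₂.2
  · exact ⟨l₂, hl₂, by simp_all⟩
  obtain rfl : l₁ = l₂ := Finset.card_le_one.mp (hF c hc) l₁
    (Finset.mem_filter.mpr ⟨hl₁, e₁⟩) l₂ (Finset.mem_filter.mpr ⟨hl₂, e₂⟩)
  exact ⟨l₁, hl₁, by simp_all⟩

/-- Otherwise `A` would entail the clause "differ from `b` somewhere on `W`". -/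
lemma exists_satF_eqOn_of_entails {A B : Formula V} {W : Finset V}
    (hAB : ∀ c : Clause V, (∀ l ∈ c, l.1 ∈ W) → entails A {c} → entails B {c})
    {b : V → Bool} (hb : satF b B) : ∃ a, satF a A ∧ ∀ v ∈ W, a v = b v := by
  by_contra! hcon
  have hA : entails A {W.image fun v => (v, !b v)} :=
    entails_singleton_iff.mpr fun a ha => by
      obtain ⟨v, hv, hne⟩ := hcon a ha
      exact clauseSat_image_iff.mpr ⟨v, hv, by simpa [Bool.eq_not] using hne⟩
  have hB := hAB _ (by simp +contextual) hA
  obtain ⟨v, -, hv⟩ := clauseSat_image_iff.mp (entails_singleton_iff.mp hB b hb)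
  simp at hv

lemma entails_clause_iff_of_commonEquiv {A B : Formula V} (h : commonEquiv A B)
    (hv : vars B ⊆ vars A) {c : Clause V} (hc : ∀ l ∈ c, l.1 ∈ varsFin B) :
    entails A {c} ↔ entails B {c} := by
  refine h {c} ?_
  rintro v ⟨c', hc', b, hb⟩
  rw [Finset.mem_singleton] at hc'
  subst hc'
  have hvB : v ∈ vars B := mem_varsFin.mp (hc (v, b) hb)
  exact ⟨hv hvB, hvB⟩

lemma modelsAndClosed_of_commonEquiv {A B : Formula V} (hA : hornFormula A)
    (h : commonEquiv A B) (hv : vars B ⊆ vars A) : modelsAndClosed B := by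
  have toA : ∀ {b}, satF b B → ∃ a, satF a A ∧ ∀ v ∈ varsFin B, a v = b v :=
    exists_satF_eqOn_of_entails fun _ hc => (entails_clause_iff_of_commonEquiv h hv hc).mp
  have toB : ∀ {a}, satF a A → ∃ b, satF b B ∧ ∀ v ∈ varsFin B, b v = a v :=
    exists_satF_eqOn_of_entails fun _ hc => (entails_clause_iff_of_commonEquiv h hv hc).mpr
  intro x y hx hy
  obtain ⟨x', hx', hxx⟩ := toA hx
  obtain ⟨y', hy', hyy⟩ := toA hy
  obtain ⟨w, hw, hww⟩ := toB (modelsAndClosed_of_hornFormula hA x' y' hx' hy')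
  exact satF_congr (fun v hv => by simp only [hww v hv, hxx v hv, hyy v hv]) hw

open Classical in
noncomputable def hornHull (F : Formula V) : Formula V :=
  (varsFin F ×ˢ (Finset.univ : Finset Bool)).powerset.filter
    fun c => hornClause c ∧ entails F {c}

open Classical in
lemma mem_hornHull {F : Formula V} {c : Clause V} :
    c ∈ hornHull F ↔ (∀ l ∈ c, l.1 ∈ varsFin F) ∧ hornClause c ∧ entails F {c} := by
  simp [hornHull, Finset.subset_iff]

lemma hornFormula_hornHull (F : Formula V) : hornFormula (hornHull F) :=
  fun _ hc => (mem_hornHull.mp hc).2.1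

lemma entails_hornHull (F : Formula V) : entails F (hornHull F) :=
  fun a ha _ hc => entails_singleton_iff.mp (mem_hornHull.mp hc).2.2 a ha

lemma exists_satF_not_clauseSat_of_satF_hornHull {F : Formula V} {m : V → Bool}
    (hm : satF m (hornHull F)) {c : Clause V} (hc : hornClause c)
    (hcF : ∀ l ∈ c, l.1 ∈ varsFin F) (hmc : ¬ clauseSat m c) :
    ∃ a, satF a F ∧ ¬ clauseSat a c := by
  by_contra! hcon
  exact hmc <| hm c <| mem_hornHull.mpr ⟨hcF, hc, entails_singleton_iff.mpr hcon⟩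

lemma exists_satF_of_modelsAndClosed {F : Formula V} (hF : modelsAndClosed F)
    {T : Finset V} (S : Finset V) (hT : ∃ a, satF a F ∧ ∀ p ∈ T, a p = true)
    (hS : ∀ v ∈ S, ∃ a, satF a F ∧ (∀ p ∈ T, a p = true) ∧ a v = false) :
    ∃ a, satF a F ∧ (∀ p ∈ T, a p = true) ∧ ∀ v ∈ S, a v = false := by
  induction S using Finset.induction_on with
  | empty =>
    obtain ⟨a, ha, haT⟩ := hT
    exact ⟨a, ha, haT, by simp⟩
  | insert x S _ ih =>
    obtain ⟨a, ha, haT, haS⟩ := ih fun v hv => hS v (Finset.mem_insert_of_mem hv)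
    obtain ⟨b, hb, hbT, hbx⟩ := hS x (Finset.mem_insert_self x S)
    refine ⟨fun v => a v && b v, hF a b ha hb, fun p hp => by simp [haT p hp, hbT p hp], ?_⟩
    simp +contextual [haS, hbx]

/-- If `m` is true on `T` and false on `S`, the Horn clauses `¬T` and `¬T ∨ v` (`v ∈ S`) are
falsified by `m`, hence not entailed by `F`; the conjunction of their countermodels is a model
of `F` agreeing with `m`. -/
lemma hornHull_entails {F : Formula V} (hF : modelsAndClosed F) : entails (hornHull F) F := by
  intro m hm
  set T := (varsFin F).filter fun v => m v = true
  set S := (varsFin F).filter fun v => m v = false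
  have hTF : ∀ p ∈ T, p ∈ varsFin F := fun p hp => (Finset.mem_filter.mp hp).1
  have hmT : ∀ p ∈ T, m p = true := fun p hp => (Finset.mem_filter.mp hp).2
  have base : ∃ a, satF a F ∧ ∀ p ∈ T, a p = true := by
    obtain ⟨a, ha, hac⟩ := exists_satF_not_clauseSat_of_satF_hornHull hm
      (hornClause_image_neg T) (by simpa using hTF) (by simpa [clauseSat_image_iff] using hmT)
    exact ⟨a, ha, by simpa [clauseSat_image_iff] using hac⟩
  have step : ∀ v ∈ S, ∃ a, satF a F ∧ (∀ p ∈ T, a p = true) ∧ a v = false := by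
    intro v hv
    obtain ⟨hvF, hmv⟩ := Finset.mem_filter.mp hv
    obtain ⟨a, ha, hac⟩ := exists_satF_not_clauseSat_of_satF_hornHull hm
      (hornClause_dClause T v) (by simpa [dClause, hvF] using hTF)
      (by simpa [clauseSat_dClause_iff, hmv] using hmT)
    exact ⟨a, ha, by simpa [clauseSat_dClause_iff] using hac⟩
  obtain ⟨a, ha, haT, haS⟩ := exists_satF_of_modelsAndClosed hF S base step
  refine satF_congr (fun v hv => ?_) ha
  cases hmv : m v
  · exact haS v (Finset.mem_filter.mpr ⟨hv, hmv⟩)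
  · exact haT v (Finset.mem_filter.mpr ⟨hv, hmv⟩)

/-- if `A` is Horn, `A ≡≡ B` and `Var(B) ⊆ Var(A)`, then `B` is
equivalent to a Horn formula. -/
theorem commonEquiv_horn (A B : Formula V)
    (hA : hornFormula A) (h : commonEquiv A B) (hv : vars B ⊆ vars A) :
    ∃ H : Formula V, hornFormula H ∧ entails B H ∧ entails H B :=
  ⟨hornHull B, hornFormula_hornHull B, entails_hornHull B,
    hornHull_entails (modelsAndClosed_of_commonEquiv hA h hv)⟩
end

section
/- Let a, b, c, x, l, m, n be pairwise distinct variables. The formulae A = { {¬a,¬b,¬c,x}, {¬x,l}, {¬x,m}, {¬x,n} } and B = { {¬a,¬b,¬c,l}, {¬a,¬b,¬c,m}, {¬a,¬b,¬c,n} } are common-equivalent: A ≡≡ B. -/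
variable {V : Type} [DecidableEq V]

/-- The formula `A = {abc → x, x → l, x → m, x → n}`. -/
def exampleA (a b c x l m n : V) : Formula V :=
  { {(a, false), (b, false), (c, false), (x, true)},
    {(x, false), (l, true)},
    {(x, false), (m, true)},
    {(x, false), (n, true)} }

/-- The formula `B = {abc → l, abc → m, abc → n}`. -/
def exampleB (a b c l m n : V) : Formula V :=
  { {(a, false), (b, false), (c, false), (l, true)},
    {(a, false), (b, false), (c, false), (m, true)},
    {(a, false), (b, false), (c, false), (n, true)} }

set_option linter.unusedSectionVars false in
lemma satF_congr_s11 {α α' : V → Bool} {C : Formula V}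
    (h : ∀ v ∈ vars C, α v = α' v) : satF α C ↔ satF α' C := by
  unfold satF clauseSat
  constructor <;> intro hs c hc <;> obtain ⟨lit, hl, he⟩ := hs c hc <;>
    refine ⟨lit, hl, ?_⟩
  · rw [← h lit.1 ⟨c, hc, lit.2, hl⟩]; exact he
  · rw [h lit.1 ⟨c, hc, lit.2, hl⟩]; exact he

lemma clauseSat4 {α : V → Bool} {a b c y : V}
    (h : α a = false ∨ α b = false ∨ α c = false ∨ α y = true) :
    clauseSat α ({(a, false), (b, false), (c, false), (y, true)} : Clause V) := by
  rcases h with h | h | h | h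
  · exact ⟨(a, false), by simp, h⟩
  · exact ⟨(b, false), by simp, h⟩
  · exact ⟨(c, false), by simp, h⟩
  · exact ⟨(y, true), by simp, h⟩

lemma clauseSat4' {α : V → Bool} {a b c y : V}
    (h : clauseSat α ({(a, false), (b, false), (c, false), (y, true)} : Clause V)) :
    α a = false ∨ α b = false ∨ α c = false ∨ α y = true := by
  obtain ⟨lit, hl, he⟩ := h
  simp only [Finset.mem_insert, Finset.mem_singleton] at hl
  rcases hl with rfl | rfl | rfl | rfl <;> simp_all

lemma clauseSat2 {α : V → Bool} {x y : V}
    (h : α x = false ∨ α y = true) :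
    clauseSat α ({(x, false), (y, true)} : Clause V) := by
  rcases h with h | h
  · exact ⟨(x, false), by simp, h⟩
  · exact ⟨(y, true), by simp, h⟩

lemma boolCase1 (p q r : Bool) :
    p = false ∨ q = false ∨ r = false ∨ (p && q && r) = true := by
  cases p <;> cases q <;> cases r <;> simp

lemma boolCase2 {p q r s : Bool}
    (h : p = false ∨ q = false ∨ r = false ∨ s = true) :
    (p && q && r) = false ∨ s = true := by
  cases p <;> cases q <;> cases r <;> simp_all

lemma clauseSat2' {α : V → Bool} {x y : V}
    (h : clauseSat α ({(x, false), (y, true)} : Clause V)) :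
    α x = false ∨ α y = true := by
  obtain ⟨lit, hl, he⟩ := h
  simp only [Finset.mem_insert, Finset.mem_singleton] at hl
  rcases hl with rfl | rfl <;> simp_all

/-- `A` and `B` are common-equivalent. -/
theorem exampleA_commonEquiv_exampleB (a b c x l m n : V)
    (hd : List.Pairwise (· ≠ ·) [a, b, c, x, l, m, n]) :
    commonEquiv (exampleA a b c x l m n) (exampleB a b c l m n) := by
  simp only [List.pairwise_cons, List.mem_cons, List.mem_singleton,
    List.not_mem_nil] at hd
  have hax : a ≠ x := hd.1 x (by tauto)
  have hbx : b ≠ x := hd.2.1 x (by tauto)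
  have hcx : c ≠ x := hd.2.2.1 x (by tauto)
  have hlx : l ≠ x := fun h => hd.2.2.2.1 l (by tauto) h.symm
  have hmx : m ≠ x := fun h => hd.2.2.2.1 m (by tauto) h.symm
  have hnx : n ≠ x := fun h => hd.2.2.2.1 n (by tauto) h.symm
  clear hd
  -- A entails B
  have hAB : entails (exampleA a b c x l m n) (exampleB a b c l m n) := by
    intro α hα
    have h1 := clauseSat4'
      (hα {(a, false), (b, false), (c, false), (x, true)} (by simp [exampleA]))
    have h2 := clauseSat2' (hα {(x, false), (l, true)} (by simp [exampleA]))
    have h3 := clauseSat2' (hα {(x, false), (m, true)} (by simp [exampleA]))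
    have h4 := clauseSat2' (hα {(x, false), (n, true)} (by simp [exampleA]))
    intro cl hcl
    simp only [exampleB, Finset.mem_insert, Finset.mem_singleton] at hcl
    rcases hcl with rfl | rfl | rfl
    · apply clauseSat4
      rcases h1 with h | h | h | h
      · tauto
      · tauto
      · tauto
      · rcases h2 with h' | h'
        · rw [h] at h'; simp at h'
        · tauto
    · apply clauseSat4
      rcases h1 with h | h | h | h
      · tauto
      · tauto
      · tauto
      · rcases h3 with h' | h'
        · rw [h] at h'; simp at h'
        · tauto
    · apply clauseSat4
      rcases h1 with h | h | h | h
      · tauto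
      · tauto
      · tauto
      · rcases h4 with h' | h'
        · rw [h] at h'; simp at h'
        · tauto
  -- x is not a variable of B
  have hxB : x ∉ vars (exampleB a b c l m n) := by
    simp only [vars, exampleB, Set.mem_setOf_eq, Finset.mem_insert,
      Finset.mem_singleton]
    rintro ⟨cl, hcl, b', hb'⟩
    rcases hcl with rfl | rfl | rfl <;>
      simp only [Finset.mem_insert, Finset.mem_singleton, Prod.mk.injEq] at hb' <;>
      tauto
  intro C hC
  constructor
  · intro hAC α hαB
    set α' : V → Bool := fun v => if v = x then (α a && α b && α c) else α v with hα'
    have hagree : ∀ v, v ≠ x → α' v = α v := by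
      intro v hv; simp [hα', hv]
    have hα'x : α' x = (α a && α b && α c) := by simp [hα']
    have hα'A : satF α' (exampleA a b c x l m n) := by
      have hB1 := clauseSat4'
        (hαB {(a, false), (b, false), (c, false), (l, true)} (by simp [exampleB]))
      have hB2 := clauseSat4'
        (hαB {(a, false), (b, false), (c, false), (m, true)} (by simp [exampleB]))
      have hB3 := clauseSat4'
        (hαB {(a, false), (b, false), (c, false), (n, true)} (by simp [exampleB]))
      intro cl hcl
      simp only [exampleA, Finset.mem_insert, Finset.mem_singleton] at hcl
      rcases hcl with rfl | rfl | rfl | rfl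
      · apply clauseSat4
        rw [hα'x, hagree a hax, hagree b hbx, hagree c hcx]
        exact boolCase1 _ _ _
      · apply clauseSat2
        rw [hα'x, hagree l hlx]
        exact boolCase2 hB1
      · apply clauseSat2
        rw [hα'x, hagree m hmx]
        exact boolCase2 hB2
      · apply clauseSat2
        rw [hα'x, hagree n hnx]
        exact boolCase2 hB3
    have hα'C := hAC α' hα'A
    rw [satF_congr_s11 (α' := α)] at hα'C
    · exact hα'C
    · intro v hv
      exact hagree v (fun h => hxB (h ▸ (hC hv).2))
  · intro hBC α hαA
    exact hBC α (hAB α hαA)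
end

section
/- Let F be a definite Horn formula, P' a finite set of variables and x a variable with x ∉ P'. The following three conditions are equivalent: (1) F ⊨ P' → x; (2) there exists a clause P → x in F such that F^x ∪ P' ⊨ P; (3) there exists a clause P → x in F such that F ∪ P' ⊨ P. -/
variable {V : Type} [DecidableEq V]

theorem mem_dClause {P : Finset V} {x : V} {l : V × Bool} :
    l ∈ dClause P x ↔ l = (x, true) ∨ l.2 = false ∧ l.1 ∈ P := by
  obtain ⟨v, b⟩ := l
  cases b <;> simp [dClause, eq_comm]

theorem mem_body {c : Clause V} {v : V} : v ∈ body c ↔ (v, false) ∈ c := by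
  simp [body]

theorem satF_union {a : V → Bool} {A B : Formula V} :
    satF a (A ∪ B) ↔ satF a A ∧ satF a B := by
  simp only [satF, Finset.mem_union, or_imp, forall_and]

theorem satF_singleton {V : Type} {a : V → Bool} {c : Clause V} :
    satF a {c} ↔ clauseSat a c := by
  simp [satF]

theorem satF_unitsOf {a : V → Bool} {P : Finset V} :
    satF a (unitsOf P) ↔ ∀ p ∈ P, a p = true := by
  simp [satF, unitsOf, clauseSat]

theorem clauseSat_dClause {a : V → Bool} {P : Finset V} {x : V} :
    clauseSat a (dClause P x) ↔ ((∀ p ∈ P, a p = true) → a x = true) := by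
  constructor
  · rintro ⟨l, hl, hal⟩ hP
    rcases mem_dClause.mp hl with rfl | ⟨hl2, hl1⟩
    · exact hal
    · simp [hP _ hl1, hl2] at hal
  · intro h
    by_cases hP : ∀ p ∈ P, a p = true
    · exact ⟨(x, true), mem_dClause.mpr (.inl rfl), h hP⟩
    · push Not at hP
      obtain ⟨p, hp, hap⟩ := hP
      exact ⟨(p, false), mem_dClause.mpr (.inr ⟨rfl, hp⟩), by simpa using hap⟩

theorem entailsV_iff {G : Formula V} {P : Finset V} :
    entailsV G P ↔ ∀ a, satF a G → ∀ p ∈ P, a p = true := by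
  simp only [entailsV, entails, satF_unitsOf]

theorem entailsV.mono {G G' : Formula V} {P : Finset V} (hG : G ⊆ G') (h : entailsV G P) :
    entailsV G' P :=
  fun a ha => h a fun c hc => ha c (hG hc)

theorem restr_subset (F : Formula V) (x : V) : restr F x ⊆ F :=
  Finset.filter_subset _ _

theorem definiteClause.exists_head {V : Type} {c : Clause V} (hc : definiteClause c) :
    ∃ h, (h, true) ∈ c ∧ ∀ v, (v, true) ∈ c → v = h := by
  obtain ⟨⟨h, b⟩, hl⟩ := Finset.card_eq_one.mp hc
  have hmem : ∀ l, l ∈ c ∧ l.2 = true ↔ l = (h, b) := by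
    simpa [Finset.ext_iff] using hl
  obtain rfl : b = true := ((hmem _).mpr rfl).2
  exact ⟨h, ((hmem _).mpr rfl).1, fun v hv => by simpa using (hmem (v, true)).mp ⟨hv, rfl⟩⟩

theorem definiteClause.eq_dClause_body {c : Clause V} (hc : definiteClause c) {x : V}
    (hx : (x, true) ∈ c) : c = dClause (body c) x := by
  obtain ⟨h, hh, huniq⟩ := hc.exists_head
  obtain rfl := huniq x hx
  ext ⟨v, b⟩
  cases b
  · simp [mem_dClause, mem_body]
  · simp only [mem_dClause]
    refine ⟨fun hv => .inl (by rw [huniq v hv]), ?_⟩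
    rintro (h' | ⟨⟨⟩, -⟩)
    simpa [h'] using hh

theorem definiteHorn.subset {V : Type} {F G : Formula V} (hG : definiteHorn G) (hFG : F ⊆ G) :
    definiteHorn F :=
  fun c hc => hG c (hFG hc)

theorem definiteHorn.union {F G : Formula V} (hF : definiteHorn F) (hG : definiteHorn G) :
    definiteHorn (F ∪ G) := by
  intro c hc
  rcases Finset.mem_union.mp hc with h | h
  exacts [hF c h, hG c h]

theorem definiteHorn_unitsOf (P : Finset V) : definiteHorn (unitsOf P) := by
  intro c hc
  obtain ⟨p, -, rfl⟩ := Finset.mem_image.mp hc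
  simp [definiteClause, Finset.filter_singleton]

noncomputable def minModel (G : Formula V) (v : V) : Bool :=
  open Classical in decide (entailsV G {v})

theorem minModel_eq_true {G : Formula V} {v : V} :
    minModel G v = true ↔ ∀ a, satF a G → a v = true := by
  simp [minModel, entailsV_iff]

theorem entailsV_iff_minModel {G : Formula V} {P : Finset V} :
    entailsV G P ↔ ∀ p ∈ P, minModel G p = true := by
  simp only [entailsV_iff, minModel_eq_true]
  grind

theorem satF_minModel {G : Formula V} (hG : definiteHorn G) : satF (minModel G) G := by
  intro c hc
  obtain ⟨h, hh, huniq⟩ := (hG c hc).exists_head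
  by_cases hbody : ∀ v, (v, false) ∈ c → minModel G v = true
  · refine ⟨(h, true), hh, minModel_eq_true.mpr fun a ha => ?_⟩
    -- a literal of `c` true under `a` cannot be negative, since the body holds in every model
    obtain ⟨⟨v, b⟩, hv, hav⟩ := ha c hc
    cases b
    · simp [minModel_eq_true.mp (hbody v hv) a ha] at hav
    · simpa [huniq v hv] using hav
  · push Not at hbody
    obtain ⟨v, hv, hmv⟩ := hbody
    exact ⟨(v, false), hv, by simpa using hmv⟩

theorem satF_update_false {F : Formula V} (hF : definiteHorn F) {x : V} {m : V → Bool}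
    (hm : satF m (restr F x))
    (hbody : ∀ P, x ∉ P → dClause P x ∈ F → ∃ p ∈ P, m p = false) :
    satF (Function.update m x false) F := by
  intro c hc
  by_cases hxf : (x, false) ∈ c
  · exact ⟨(x, false), hxf, by simp⟩
  by_cases hxt : (x, true) ∈ c
  · have hceq := (hF c hc).eq_dClause_body hxt
    obtain ⟨p, hp, hmp⟩ := hbody (body c) (mt mem_body.mp hxf) (hceq ▸ hc)
    have hpx : p ≠ x := by rintro rfl; exact hxf (mem_body.mp hp)
    exact ⟨(p, false), mem_body.mp hp, by simp [hpx, hmp]⟩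
  · obtain ⟨⟨v, b⟩, hv, hmv⟩ := hm c (Finset.mem_filter.mpr ⟨hc, hxt, hxf⟩)
    have hvx : v ≠ x := by rintro rfl; cases b <;> contradiction
    exact ⟨(v, b), hv, by simpa [hvx] using hmv⟩

theorem entails_dClause_of_entailsV {F : Formula V} {P P' : Finset V} {x : V}
    (hPF : dClause P x ∈ F) (hP : entailsV (F ∪ unitsOf P') P) :
    entails F {dClause P' x} := by
  intro a ha
  rw [satF_singleton, clauseSat_dClause]
  intro haP'
  have haP := entailsV_iff.mp hP a (satF_union.mpr ⟨ha, satF_unitsOf.mpr haP'⟩)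
  exact clauseSat_dClause.mp (ha _ hPF) haP

theorem exists_dClause_entailsV_restr {F : Formula V} (hF : definiteHorn F) {P' : Finset V}
    {x : V} (hx : x ∉ P') (h : entails F {dClause P' x}) :
    ∃ P, x ∉ P ∧ dClause P x ∈ F ∧ entailsV (restr F x ∪ unitsOf P') P := by
  by_contra! hnone
  set G := restr F x ∪ unitsOf P'
  have hmG := satF_union.mp
    (satF_minModel ((hF.subset (restr_subset F x)).union (definiteHorn_unitsOf P')))
  have hbody : ∀ P, x ∉ P → dClause P x ∈ F → ∃ p ∈ P, minModel G p = false := by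
    intro P hxP hPF
    simpa [entailsV_iff_minModel] using hnone P hxP hPF
  have hsat := satF_singleton.mp (h _ (satF_update_false hF hmG.1 hbody))
  refine absurd (clauseSat_dClause.mp hsat fun p hp => ?_) (by simp)
  have hpx : p ≠ x := by rintro rfl; exact hx hp
  simpa [hpx] using satF_unitsOf.mp hmG.2 p hp

/-- for a definite Horn formula `F` and a non-tautological clause
`P' → x`, the conditions `F ⊨ P' → x`, `F^x ∪ P' ⊨ P` for some `P → x ∈ F`,
and `F ∪ P' ⊨ P` for some `P → x ∈ F` are equivalent. -/
theorem set_implies_set (F : Formula V) (hF : definiteHorn F)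
    (P' : Finset V) (x : V) (hx : x ∉ P') :
    (entails F {dClause P' x} ↔
      ∃ P : Finset V, x ∉ P ∧ dClause P x ∈ F ∧
        entailsV (restr F x ∪ unitsOf P') P) ∧
    ((∃ P : Finset V, x ∉ P ∧ dClause P x ∈ F ∧
        entailsV (restr F x ∪ unitsOf P') P) ↔
      ∃ P : Finset V, x ∉ P ∧ dClause P x ∈ F ∧
        entailsV (F ∪ unitsOf P') P) := by
  have h12 := exists_dClause_entailsV_restr hF hx
  have h23 : (∃ P, x ∉ P ∧ dClause P x ∈ F ∧ entailsV (restr F x ∪ unitsOf P') P) →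
      ∃ P, x ∉ P ∧ dClause P x ∈ F ∧ entailsV (F ∪ unitsOf P') P :=
    fun ⟨P, hxP, hPF, hP⟩ =>
      ⟨P, hxP, hPF, hP.mono (Finset.union_subset_union (restr_subset F x) subset_rfl)⟩
  have h31 : (∃ P, x ∉ P ∧ dClause P x ∈ F ∧ entailsV (F ∪ unitsOf P') P) →
      entails F {dClause P' x} := fun ⟨_, _, hPF, hP⟩ => entails_dClause_of_entailsV hPF hP
  exact ⟨⟨h12, h31 ∘ h23⟩, ⟨h23, h12 ∘ h31⟩⟩
end
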